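/- arXiv:1207.0959 — 5 statements merged into one kernel-verified Lean document; each statement's English description precedes it below -/
import Mathlib

section
/- Let C be a regular category with enough projectives such that the projective objects are closed under finite limits. If P is a projective object of C, then the image y(P) of P under the embedding y : C → C_{ex/reg} into the ex/reg-completion is projective in C_{ex/reg}. -/
open CategoryTheory CategoryTheory.Limits

universe v u v₂ u₂

/-- A morphism is a cover if the only subobject of its codomain through which
it factors is the maximal one. -/
def IsCover {C : Type u} [Category.{v} C] {X Y : C} (f : Y ⟶ X) : Prop :=
  ∀ ⦃Z : C⦄ (m : Z ⟶ X) (g : Y ⟶ Z), Mono m → g ≫ m = f → IsIso m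

/-- An object is projective (w.r.t. covers) if every cover onto it splits. -/
def CovProjective {C : Type u} [Category.{v} C] (P : C) : Prop :=
  ∀ ⦃X : C⦄ (q : X ⟶ P), IsCover q → ∃ s : P ⟶ X, s ≫ q = 𝟙 P

/-- A category has enough projectives if every object is covered by a projective. -/
def HasEnoughCovProjectives (C : Type u) [Category.{v} C] : Prop :=
  ∀ X : C, ∃ (P : C) (q : P ⟶ X), CovProjective P ∧ IsCover q

/-- A regular category: finite limits, cover-mono factorizations,
and covers stable under pullback. -/
class RegularCat (C : Type u) [Category.{v} C] extends HasFiniteLimits C : Prop where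
  factor : ∀ {X Y : C} (f : X ⟶ Y), ∃ (Z : C) (e : X ⟶ Z) (m : Z ⟶ Y),
    IsCover e ∧ Mono m ∧ e ≫ m = f
  pullback_cover : ∀ {X Y Z L : C} (f : X ⟶ Y) (g : Z ⟶ Y)
    (p₁ : L ⟶ X) (p₂ : L ⟶ Z), IsPullback p₁ p₂ f g → IsCover f → IsCover p₂
section Exactness

variable {C : Type u} [Category.{v} C]

/-- The relation on generalized elements induced by a relation r : R ⟶ X ⨯ X. -/
def relOf [HasFiniteLimits C] {R X : C} (r : R ⟶ X ⨯ X) {A : C} (x y : A ⟶ X) : Prop :=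
  ∃ a : A ⟶ R, a ≫ r = prod.lift x y

/-- r : R ⟶ X ⨯ X is an equivalence relation: it is a subobject of X ⨯ X and
induces an equivalence relation on every hom-set Hom(A, X). -/
structure IsEquivRel [HasFiniteLimits C] {R X : C} (r : R ⟶ X ⨯ X) : Prop where
  mono : Mono r
  iseqv : ∀ A : C, Equivalence (fun x y : A ⟶ X => relOf r x y)

/-- The fork r₀, r₁ ⇉ X → Q is exact: it is both a pullback and a coequalizer. -/
structure IsExactFork {R X Q : C} (r₀ r₁ : R ⟶ X) (q : X ⟶ Q) : Prop where
  w : r₀ ≫ q = r₁ ≫ q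
  isPullback : IsPullback r₀ r₁ q q
  isCoequalizer : Nonempty (IsColimit (Cofork.ofπ q w))

/-- The fork is stably exact: it is exact and remains exact after pullback
along any map P ⟶ Q. -/
def IsStablyExactFork [HasFiniteLimits C] {R X Q : C} (r₀ r₁ : R ⟶ X) (q : X ⟶ Q) : Prop :=
  ∃ w : r₀ ≫ q = r₁ ≫ q, Nonempty (IsColimit (Cofork.ofπ q w)) ∧ IsPullback r₀ r₁ q q ∧
    ∀ {P : C} (p : P ⟶ Q),
      IsExactFork
        (pullback.lift (pullback.fst (r₀ ≫ q) p ≫ r₀) (pullback.snd (r₀ ≫ q) p)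
          (by simpa using pullback.condition) :
            pullback (r₀ ≫ q) p ⟶ pullback q p)
        (pullback.lift (pullback.fst (r₀ ≫ q) p ≫ r₁) (pullback.snd (r₀ ≫ q) p)
          (by rw [Category.assoc, ← w]; simpa using pullback.condition))
        (pullback.snd q p)

/-- An exact category: regular, and every equivalence relation fits into a
stably exact fork. -/
class ExactCat (C : Type u) [Category.{v} C] extends RegularCat C : Prop where
  exact_quotient : ∀ {R X : C} (r : R ⟶ X ⨯ X), IsEquivRel r →
    ∃ (Q : C) (q : X ⟶ Q), IsStablyExactFork (r ≫ prod.fst) (r ≫ prod.snd) q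

end Exactness

/-!
Given a cover `q : X ⟶ y P`, choose a cover `c : y A ⟶ X`. The composite `c ≫ q` is a cover
and, `y` being full, it is `y f` for some `f : A ⟶ P`. Since `y` is fully faithful and
preserves monomorphisms, it reflects covers, so `f` is a cover in `C`; a section `s` of `f`
then gives the section `y s ≫ c` of `q`.
-/

section Covers

variable {E : Type u} [Category.{v} E]

/-- Pulling the mono `m` back along `f` gives a mono through which `e` factors. -/
lemma IsCover.comp [HasPullbacks E] {X Y W : E} {e : Y ⟶ X} {f : X ⟶ W}
    (he : IsCover e) (hf : IsCover f) : IsCover (e ≫ f) := by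
  intro Z m g hm hgm
  have hfst : IsIso (pullback.fst f m) :=
    he _ (pullback.lift e g hgm.symm) inferInstance (pullback.lift_fst _ _ _)
  refine hf m (inv (pullback.fst f m) ≫ pullback.snd f m) hm ?_
  rw [Category.assoc, ← pullback.condition, IsIso.inv_hom_id_assoc]

lemma IsCover.of_map {F : Type u₂} [Category.{v₂} F] (G : E ⥤ F)
    [G.PreservesMonomorphisms] [G.ReflectsIsomorphisms] {X Y : E} {f : Y ⟶ X}
    (h : IsCover (G.map f)) : IsCover f := by
  intro Z m g hm hgm
  have : IsIso (G.map m) := h (G.map m) (G.map g) inferInstance (by rw [← G.map_comp, hgm])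
  exact isIso_of_reflects_iso m G

end Covers

theorem exRegCompletion_preserves_projectives_general
    {C : Type u} [Category.{v} C] {D : Type u₂} [Category.{v₂} D]
    [ExactCat D]
    (y : C ⥤ D) [y.Full] [y.Faithful]
    (hlex : PreservesFiniteLimits y)
    (hcovering : ∀ Z : D, ∃ (A : C) (c : y.obj A ⟶ Z), IsCover c)
    (P : C) (hP : CovProjective P) : CovProjective (y.obj P) := by
  intro X q hq
  obtain ⟨A, c, hc⟩ := hcovering X
  have hf : IsCover (y.preimage (c ≫ q)) :=
    IsCover.of_map y (by simpa using hc.comp hq)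
  obtain ⟨s, hs⟩ := hP _ hf
  refine ⟨y.map s ≫ c, ?_⟩
  simpa using congrArg y.map hs

/-- If C is regular with enough projectives closed under finite limits, and
y : C ⥤ D exhibits the exact category D as the ex/reg-completion of C
(y is regular, full and faithful, covering, and full on subobjects), then
y sends projectives to projectives. -/
theorem exRegCompletion_preserves_projectives
    {C : Type u} [Category.{v} C] {D : Type u₂} [Category.{v₂} D]
    [RegularCat C] [ExactCat D]
    (hep : HasEnoughCovProjectives C)
    (hprojlim : ∀ (J : Type) [SmallCategory J] [FinCategory J] (F : J ⥤ C),
      (∀ j : J, CovProjective (F.obj j)) → CovProjective (limit F))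
    (y : C ⥤ D) [y.Full] [y.Faithful]
    (hlex : PreservesFiniteLimits y)
    (hcov : ∀ {X Y : C} (f : Y ⟶ X), IsCover f → IsCover (y.map f))
    (hcovering : ∀ Z : D, ∃ (A : C) (c : y.obj A ⟶ Z), IsCover c)
    (hfullsub : ∀ (A : C) (S : D) (m : S ⟶ y.obj A), Mono m →
      ∃ (B : C) (n : B ⟶ A), Mono n ∧ ∃ e : y.obj B ≅ S, e.hom ≫ m = y.map n)
    (P : C) (hP : CovProjective P) : CovProjective (y.obj P) :=
  exRegCompletion_preserves_projectives_general y hlex hcovering P hP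
end

section
/- Let F : C → D be a full functor between regular categories such that F preserves and reflects covers. If an object Q of C has the property that for every cover p : F(A) → X in D with X covering F(Q) via q : X → F(Q), the composite qp is in the image of F, and every object of D is covered by one in the image of F, then F(Q) is projective in D whenever Q is projective in C. -/
open CategoryTheory CategoryTheory.Limits

universe v u v₂ u₂

/-- Pulling the mono `m` back along `g` gives a mono through which `f` factors, so it is an
isomorphism, and then `g` factors through `m`. -/
lemma IsCover.comp_s4 {C : Type u} [Category.{v} C] [HasPullbacks C]
    {A B X : C} {f : A ⟶ B} {g : B ⟶ X}
    (hf : IsCover f) (hg : IsCover g) : IsCover (f ≫ g) := by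
  intro Z m h hm hfac
  have hiso : IsIso (pullback.fst g m) :=
    hf _ (pullback.lift f h (by rw [hfac])) inferInstance (pullback.lift_fst _ _ _)
  exact hg m (inv (pullback.fst g m) ≫ pullback.snd g m) hm
    (by rw [Category.assoc, ← pullback.condition, IsIso.inv_hom_id_assoc])

theorem image_of_projective_is_projective_general
    {C : Type u} [Category.{v} C] {D : Type u₂} [Category.{v₂} D]
    [RegularCat D] (F : C ⥤ D)
    (hrefl : ∀ {X Y : C} (f : Y ⟶ X), IsCover (F.map f) → IsCover f)
    (Q : C)
    (hlift : ∀ {A : C} {X : D} (p : F.obj A ⟶ X) (q : X ⟶ F.obj Q),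
      IsCover p → IsCover q → ∃ h : A ⟶ Q, F.map h = p ≫ q)
    (hcovering : ∀ Z : D, ∃ (A : C) (c : F.obj A ⟶ Z), IsCover c)
    (hQ : CovProjective Q) : CovProjective (F.obj Q) := by
  intro X q hq
  obtain ⟨A, c, hc⟩ := hcovering X
  obtain ⟨h, hh⟩ := hlift c q hc hq
  have hh_cover : IsCover h := hrefl h (hh ▸ hc.comp_s4 hq)
  obtain ⟨s, hs⟩ := hQ h hh_cover
  refine ⟨F.map s ≫ c, ?_⟩
  rw [Category.assoc, ← hh, ← F.map_comp, hs, F.map_id]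

/-- If F is full, preserves and reflects covers, is covering, and for the
object Q every composite of covers F(A) → X → F(Q) is in the image of F,
then F sends the projective Q to a projective object. -/
theorem image_of_projective_is_projective
    {C : Type u} [Category.{v} C] {D : Type u₂} [Category.{v₂} D]
    [RegularCat C] [RegularCat D] (F : C ⥤ D) [F.Full]
    (hpres : ∀ {X Y : C} (f : Y ⟶ X), IsCover f → IsCover (F.map f))
    (hrefl : ∀ {X Y : C} (f : Y ⟶ X), IsCover (F.map f) → IsCover f)
    (Q : C)
    (hlift : ∀ {A : C} {X : D} (p : F.obj A ⟶ X) (q : X ⟶ F.obj Q),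
      IsCover p → IsCover q → ∃ h : A ⟶ Q, F.map h = p ≫ q)
    (hcovering : ∀ Z : D, ∃ (A : C) (c : F.obj A ⟶ Z), IsCover c)
    (hQ : CovProjective Q) : CovProjective (F.obj Q) :=
  image_of_projective_is_projective_general F hrefl Q hlift hcovering hQ
end

section
/- In ZF, given a set I and a family of surjections p_i : B_i → κ onto a cardinal κ such that every surjection onto κ is factored through by some p_i, if m : W → Ord is defined on the W-type W over the signature A = I + {0,1} (with arities B_i for i ∈ I, arity ∅ for 0, arity {0} for 1) by m(sup_i t) = sup{m(t b) : b ∈ B_i}, m(sup_0 t) = 0, m(sup_1 t) = m(t 0) + 1, then the image of m contains 0, is closed under ordinal successor, and is closed under suprema of κ-indexed families. -/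
open Function

universe u

variable {I : Type u}

/-- The arities of the signature A = I + {0, 1}: arity B i for i ∈ I,
arity ∅ for 0 and arity {0} for 1. -/
def Arity (B : I → Type u) : I ⊕ Bool → Type u
  | Sum.inl i => B i
  | Sum.inr false => PEmpty
  | Sum.inr true => PUnit

/-- The map m : W → Ord defined by m(sup_i t) = sup{m(t b) : b ∈ B i},
m(sup_0 t) = 0 and m(sup_1 t) = m(t 0) + 1. -/
noncomputable def wRank (B : I → Type u) : WType (Arity B) → Ordinal.{u}
  | WType.mk (Sum.inl i) t => ⨆ b : B i, wRank B (t b)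
  | WType.mk (Sum.inr false) _ => 0
  | WType.mk (Sum.inr true) t => wRank B (t PUnit.unit) + 1

/-- Given a family of surjections p i : B i → κ onto (the underlying type of)
a cardinal κ through which every surjection onto κ factors, the image of m
contains 0, is closed under successor, and is closed under suprema of
κ-indexed families. -/
theorem wRank_image_closure (κ : Cardinal.{u}) (B : I → Type u)
    (p : ∀ i, B i → κ.out) (hsurj : ∀ i, Surjective (p i))
    (hfac : ∀ (Z : Type u) (q : Z → κ.out), Surjective q →
      ∃ (i : I) (f : B i → Z), ∀ b, q (f b) = p i b) :
    (0 : Ordinal.{u}) ∈ Set.range (wRank B) ∧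
    (∀ α ∈ Set.range (wRank B), α + 1 ∈ Set.range (wRank B)) ∧
    (∀ g : κ.out → Ordinal.{u}, (∀ x, g x ∈ Set.range (wRank B)) →
      (⨆ x, g x) ∈ Set.range (wRank B)) := by
  refine ⟨⟨WType.mk (Sum.inr false) PEmpty.elim, rfl⟩, ?_, ?_⟩
  · rintro α ⟨w, rfl⟩
    exact ⟨WType.mk (Sum.inr true) (fun _ => w), rfl⟩
  · intro g hg
    choose w hw using hg
    obtain ⟨i, f, hf⟩ := hfac κ.out id surjective_id
    refine ⟨WType.mk (Sum.inl i) (fun b => w (p i b)), ?_⟩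
    show (⨆ b : B i, wRank B (w (p i b))) = ⨆ x, g x
    simp only [hw]
    rw [iSup, iSup]
    congr 1
    exact (hsurj i).range_comp g
end

section
/- In a locally cartesian closed category E, an object P is a choice object if and only if the functor (−)^P : E → E preserves covers. -/
open CategoryTheory CategoryTheory.Limits

universe v u v₂ u₂

open MonoidalCategory in
/-- P is a choice object: for every cover q : Y → X and arrow T ⊗ P → X there
is a cover T' → T and a map T' ⊗ P → Y making the evident square commute. -/
def ChoiceObject {E : Type u} [Category.{v} E] [CartesianMonoidalCategory E] (P : E) : Prop :=
  ∀ ⦃X Y : E⦄ (q : Y ⟶ X), IsCover q → ∀ (T : E) (h : T ⊗ P ⟶ X),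
    ∃ (T' : E) (c : T' ⟶ T), IsCover c ∧
      ∃ k : T' ⊗ P ⟶ Y, k ≫ q = (c ⊗ₘ 𝟙 P) ≫ h

open MonoidalCategory MonoidalClosed

/-! Transposing along the adjunction `- ⊗ P ⊣ (−)^P`, the choice-object condition for a cover `q`
says exactly that every map `T → X^P` lifts along `q^P` after restricting along some cover `T' → T`.
In a regular category this local lifting property characterises covers: pulling back along
the map gives the lift, and lifting the identity exhibits the map as a factor of a cover. -/

section Covers

variable {C : Type u} [Category.{v} C]

lemma IsCover.of_comp {X Y Z : C} {u : Z ⟶ Y} {g : Y ⟶ X} (h : IsCover (u ≫ g)) :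
    IsCover g :=
  fun _ m v hm hv ↦ h m (u ≫ v) hm (by rw [Category.assoc, hv])

def LiftsLocally {X Y : C} (p : Y ⟶ X) : Prop :=
  ∀ ⦃T : C⦄ (f : T ⟶ X), ∃ (T' : C) (c : T' ⟶ T), IsCover c ∧ ∃ g : T' ⟶ Y, g ≫ p = c ≫ f

lemma isCover_iff_liftsLocally [RegularCat C] {X Y : C} (p : Y ⟶ X) :
    IsCover p ↔ LiftsLocally p := by
  refine ⟨fun hp T f ↦ ?_, fun hp ↦ ?_⟩
  · exact ⟨pullback p f, pullback.snd p f,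
      RegularCat.pullback_cover _ _ _ _ (IsPullback.of_hasPullback p f) hp,
      pullback.fst p f, pullback.condition⟩
  · obtain ⟨_, c, hc, g, hg⟩ := hp (𝟙 X)
    rw [Category.comp_id] at hg
    exact IsCover.of_comp (hg ▸ hc)

end Covers

section Transpose

variable {C : Type u} [Category.{v} C] [CartesianMonoidalCategory C] (P : C) [Closed P]

local instance : BraidedCategory C := .ofCartesianMonoidalCategory

def curryRightEquiv (T X : C) : (T ⊗ P ⟶ X) ≃ (T ⟶ (ihom P).obj X) where
  toFun h := curry ((β_ P T).hom ≫ h)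
  invFun f := (β_ P T).inv ≫ uncurry f
  left_inv h := by simp
  right_inv f := by simp

variable {P}

lemma curryRightEquiv_comp_ihom_map {T X Y : C} (k : T ⊗ P ⟶ Y) (q : Y ⟶ X) :
    curryRightEquiv P T Y k ≫ (ihom P).map q = curryRightEquiv P T X (k ≫ q) := by
  simp only [curryRightEquiv, Equiv.coe_fn_mk, ← curry_natural_right, Category.assoc]

lemma comp_curryRightEquiv {T' T X : C} (c : T' ⟶ T) (h : T ⊗ P ⟶ X) :
    c ≫ curryRightEquiv P T X h = curryRightEquiv P T' X ((c ⊗ₘ 𝟙 P) ≫ h) := by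
  simp only [curryRightEquiv, Equiv.coe_fn_mk, ← curry_natural_left, tensorHom_id,
    BraidedCategory.braiding_naturality_right_assoc]

lemma choiceObject_iff_liftsLocally :
    ChoiceObject P ↔ ∀ {X Y : C} (q : Y ⟶ X), IsCover q → LiftsLocally ((ihom P).map q) := by
  refine forall₂_congr fun X Y ↦ forall₂_congr fun q _ ↦ forall_congr' fun T ↦
    (curryRightEquiv P T X).forall_congr fun h ↦ exists₂_congr fun T' c ↦
      and_congr_right fun _ ↦ (curryRightEquiv P T' Y).exists_congr fun k ↦ ?_
  rw [curryRightEquiv_comp_ihom_map, comp_curryRightEquiv, Equiv.apply_eq_iff_eq]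

end Transpose

theorem choiceObject_iff_exp_preserves_covers_general
    {E : Type u} [Category.{v} E] [RegularCat E] [CartesianMonoidalCategory E]
    (P : E) [Closed P] :
    ChoiceObject P ↔ ∀ {X Y : E} (q : Y ⟶ X), IsCover q → IsCover ((ihom P).map q) := by
  rw [choiceObject_iff_liftsLocally]
  simp only [isCover_iff_liftsLocally]

/-- In a locally cartesian closed regular category, an object P is a choice
object iff the functor (−)^P preserves covers. -/
theorem choiceObject_iff_exp_preserves_covers
    {E : Type u} [Category.{v} E] [RegularCat E] [CartesianMonoidalCategory E]
    [MonoidalClosed E]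
    (lcc : ∀ {X Y : E} (f : X ⟶ Y), (Over.pullback f).IsLeftAdjoint)
    (P : E) [Closed P] :
    ChoiceObject P ↔ ∀ {X Y : E} (q : Y ⟶ X), IsCover q → IsCover ((ihom P).map q) :=
  choiceObject_iff_exp_preserves_covers_general P
end

section
/- Let C be a category with finite limits, D an exact category, and F : C → D a finite-limit-preserving, full and faithful, covering functor whose image consists up to isomorphism of the projectives of D. Then for any two objects X, Y of C, every subobject of F(X) × F(Y) in D that is an equivalence relation and whose domain is projective is isomorphic to the image under F of an equivalence relation in C. -/
/-!
A projective subobject `R` of `F X ⨯ F X` is isomorphic to some `F A`. As `F` preserves binary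
products and is fully faithful, `r` comes from a unique `r₀ : A ⟶ X ⨯ X`, and for `x y : B ⟶ X`
the relation `r₀` puts on `x, y` is the relation `r` puts on `F x, F y`. Thus `r₀` induces on
each `Hom(B, X)` the restriction of an equivalence relation along `F.map`.
-/

open CategoryTheory CategoryTheory.Limits

universe v u v₂ u₂

section

variable {C : Type u} [Category.{v} C] {D : Type u₂} [Category.{v₂} D]
  [HasFiniteLimits C] [HasFiniteLimits D] (F : C ⥤ D)

lemma map_prodLift_comp_prodComparison {B X Y : C} (x : B ⟶ X) (y : B ⟶ Y) :
    F.map (prod.lift x y) ≫ prodComparison F X Y = prod.lift (F.map x) (F.map y) := by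
  ext <;> simp only [Category.assoc, prodComparison_fst, prodComparison_snd, ← F.map_comp,
    prod.lift_fst, prod.lift_snd]

variable [F.Full] [F.Faithful] {X A : C} {R : D} {r : R ⟶ F.obj X ⨯ F.obj X}
  {r₀ : A ⟶ X ⨯ X} (φ : F.obj A ≅ R)

lemma relOf_map_iff [Mono (prodComparison F X X)]
    (h : φ.hom ≫ r = F.map r₀ ≫ prodComparison F X X) {B : C} (x y : B ⟶ X) :
    relOf r (F.map x) (F.map y) ↔ relOf r₀ x y := by
  constructor
  · rintro ⟨b, hb⟩
    refine ⟨F.preimage (b ≫ φ.inv), F.map_injective ?_⟩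
    rw [← cancel_mono (prodComparison F X X), map_prodLift_comp_prodComparison, F.map_comp,
      F.map_preimage, Category.assoc, ← h, Category.assoc, φ.inv_hom_id_assoc, hb]
  · rintro ⟨a, ha⟩
    refine ⟨F.map a ≫ φ.hom, ?_⟩
    rw [Category.assoc, h, ← Category.assoc, ← F.map_comp, ha,
      map_prodLift_comp_prodComparison]

lemma isEquivRel_of_map [Mono (prodComparison F X X)]
    (h : φ.hom ≫ r = F.map r₀ ≫ prodComparison F X X) (hr : IsEquivRel r) :
    IsEquivRel r₀ where
  mono := by
    have := hr.mono
    have : Mono (F.map r₀ ≫ prodComparison F X X) := h ▸ mono_comp φ.hom r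
    exact F.mono_of_mono_map (mono_of_mono _ (prodComparison F X X))
  iseqv B := by
    have hrel : (fun x y : B ⟶ X => relOf r₀ x y) = (fun x y => relOf r (F.map x) (F.map y)) := by
      funext x y
      exact propext (relOf_map_iff F φ h x y).symm
    exact hrel ▸ (hr.iseqv (F.obj B)).comap F.map

end

theorem equivRel_on_image_is_image_of_equivRel_general
    {C : Type u} [Category.{v} C] {D : Type u₂} [Category.{v₂} D]
    [HasFiniteLimits C] [ExactCat D]
    (F : C ⥤ D) [F.Full] [F.Faithful]
    (hlex : PreservesFiniteLimits F)
    (hprojonto : ∀ Q : D, CovProjective Q → ∃ A : C, Nonempty (F.obj A ≅ Q))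
    (X : C) (R : D) (r : R ⟶ F.obj X ⨯ F.obj X)
    (hr : IsEquivRel r) (hR : CovProjective R) :
    ∃ (R₀ : C) (r₀ : R₀ ⟶ X ⨯ X), IsEquivRel r₀ ∧
      ∃ e : F.obj R₀ ≅ R, e.hom ≫ r = F.map r₀ ≫ prodComparison F X X := by
  obtain ⟨A, ⟨φ⟩⟩ := hprojonto R hR
  let r₀ : A ⟶ X ⨯ X := F.preimage (φ.hom ≫ r ≫ inv (prodComparison F X X))
  have hr₀ : φ.hom ≫ r = F.map r₀ ≫ prodComparison F X X := by simp [r₀]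
  exact ⟨A, r₀, isEquivRel_of_map F φ hr₀ hr, φ, hr₀⟩

/-- Let F : C ⥤ D exhibit the exact category D as the ex/lex-completion of a
finitely complete C (F preserves finite limits, is fully faithful, covering,
and its image consists, up to isomorphism, of the projectives of D). Then
every equivalence-relation subobject of F(X) ⨯ F(X) with projective domain is
(up to isomorphism over the product comparison) the image under F of an
equivalence relation in C. -/
theorem equivRel_on_image_is_image_of_equivRel
    {C : Type u} [Category.{v} C] {D : Type u₂} [Category.{v₂} D]
    [HasFiniteLimits C] [ExactCat D]
    (F : C ⥤ D) [F.Full] [F.Faithful]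
    (hlex : PreservesFiniteLimits F)
    (hcovering : ∀ Z : D, ∃ (A : C) (c : F.obj A ⟶ Z), IsCover c)
    (hproj : ∀ A : C, CovProjective (F.obj A))
    (hprojonto : ∀ Q : D, CovProjective Q → ∃ A : C, Nonempty (F.obj A ≅ Q))
    (X : C) (R : D) (r : R ⟶ F.obj X ⨯ F.obj X)
    (hr : IsEquivRel r) (hR : CovProjective R) :
    ∃ (R₀ : C) (r₀ : R₀ ⟶ X ⨯ X), IsEquivRel r₀ ∧
      ∃ e : F.obj R₀ ≅ R, e.hom ≫ r = F.map r₀ ≫ prodComparison F X X :=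
  equivRel_on_image_is_image_of_equivRel_general F hlex hprojonto X R r hr hR
end
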